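/- arXiv:1911.05222 — 5 statements merged into one kernel-verified Lean document; each statement's English description precedes it below -/
import Mathlib

section
/- Let V be a finite-dimensional real inner product space, K : V × V → V a symmetric bilinear map, K_X the linear operator Y ↦ K(X,Y), ε, λ, a ∈ ℝ, T ∈ V with K(T,T) = λT, and define R(X,Y)Z := ε(⟨Y,Z⟩X − ⟨X,Z⟩Y) − (K_X K_Y − K_Y K_X)Z. If R(X,T)T = −a X for every X orthogonal to T, then K_T(K_T X) − λ K_T X + (ε‖T‖² + a) X = 0 for every X orthogonal to T; i.e. the restriction of K_T to the orthogonal complement of T satisfies the quadratic polynomial equation x² − λx + (ε‖T‖² + a) = 0. -/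
open scoped RealInnerProductSpace

section GaussCurvature

variable {V : Type*} [NormedAddCommGroup V] [InnerProductSpace ℝ V]

/-- The right-hand side of the Gauss equation `R̂(X,Y)Z = ε(h(Y,Z)X − h(X,Z)Y) − [K_X,K_Y]Z`. -/
def gaussCurvature (eps : ℝ) (K : V →ₗ[ℝ] V →ₗ[ℝ] V) (X Y Z : V) : V :=
  eps • (⟪Y, Z⟫ • X - ⟪X, Z⟫ • Y) - (K X (K Y Z) - K Y (K X Z))

theorem gaussCurvature_apply_eq_of_inner_eq_zero (eps lam : ℝ) (K : V →ₗ[ℝ] V →ₗ[ℝ] V)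
    {X T : V} (hKsymm : K X T = K T X) (hTT : K T T = lam • T) (hX : ⟪X, T⟫ = 0) :
    gaussCurvature eps K X T T = (eps * ‖T‖ ^ 2) • X - lam • K T X + K T (K T X) := by
  rw [gaussCurvature, hX, hTT, real_inner_self_eq_norm_sq, map_smul, hKsymm]
  module

end GaussCurvature

theorem KT_satisfies_quadratic_general
    {V : Type*} [NormedAddCommGroup V] [InnerProductSpace ℝ V]
    (K : V →ₗ[ℝ] V →ₗ[ℝ] V) (hKsymm : ∀ X Y : V, K X Y = K Y X)
    (eps lam a : ℝ) (T : V) (hTT : K T T = lam • T)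
    (R : V → V → V → V)
    (hR : ∀ X Y Z : V,
      R X Y Z = eps • (⟪Y, Z⟫ • X - ⟪X, Z⟫ • Y) - (K X (K Y Z) - K Y (K X Z)))
    (hcurv : ∀ X : V, ⟪X, T⟫ = 0 → R X T T = (-a) • X) :
    ∀ X : V, ⟪X, T⟫ = 0 →
      K T (K T X) - lam • K T X + (eps * ‖T‖ ^ 2 + a) • X = 0 := by
  intro X hX
  have hJacobi : (eps * ‖T‖ ^ 2) • X - lam • K T X + K T (K T X) = (-a) • X := by
    rw [← gaussCurvature_apply_eq_of_inner_eq_zero eps lam K (hKsymm X T) hTT hX, ← hcurv X hX]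
    exact (hR X T T).symm
  calc K T (K T X) - lam • K T X + (eps * ‖T‖ ^ 2 + a) • X
      = ((eps * ‖T‖ ^ 2) • X - lam • K T X + K T (K T X)) - (-a) • X := by module
    _ = 0 := by rw [hJacobi, sub_self]

/-- Pointwise operator form of Lemma 3.2(i): if `K T T = λ T` and the
Gauss-equation curvature satisfies `R(X,T)T = −a X` for all `X ⊥ T`, then on `T^⊥`
the operator `K_T` satisfies `K_T² − λ K_T + (ε‖T‖² + a) id = 0`. -/
theorem KT_satisfies_quadratic
    {V : Type*} [NormedAddCommGroup V] [InnerProductSpace ℝ V] [FiniteDimensional ℝ V]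
    (K : V →ₗ[ℝ] V →ₗ[ℝ] V) (hKsymm : ∀ X Y : V, K X Y = K Y X)
    (eps lam a : ℝ) (T : V) (hTT : K T T = lam • T)
    (R : V → V → V → V)
    (hR : ∀ X Y Z : V,
      R X Y Z = eps • (⟪Y, Z⟫ • X - ⟪X, Z⟫ • Y) - (K X (K Y Z) - K Y (K X Z)))
    (hcurv : ∀ X : V, ⟪X, T⟫ = 0 → R X T T = (-a) • X) :
    ∀ X : V, ⟪X, T⟫ = 0 →
      K T (K T X) - lam • K T X + (eps * ‖T‖ ^ 2 + a) • X = 0 :=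
  KT_satisfies_quadratic_general K hKsymm eps lam a T hTT R hR hcurv
end

section
/- Let V be a finite-dimensional real inner product space, K : V × V → V a symmetric bilinear map, K_X the operator Y ↦ K(X,Y), ε, λ, a ∈ ℝ, T ∈ V with K(T,T) = λT, and R(X,Y)Z := ε(⟨Y,Z⟩X − ⟨X,Z⟩Y) − (K_X K_Y − K_Y K_X)Z. Assume R(X,T)T = −a X for every X orthogonal to T. Then every real number μ for which there exists a nonzero vector X orthogonal to T with K_T X = μX satisfies μ² − λμ + ε‖T‖² + a = 0; consequently there are at most two such eigenvalues of K_T on the orthogonal complement of T. -/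
/-! Evaluated at an eigenvector `X ⊥ T` of `K_T`, every term of the Gauss equation for
`R(X,T)T` is a multiple of `X`, so `R(X,T)T = -a X` becomes a monic quadratic equation in
the eigenvalue, which has at most two roots. -/

open scoped RealInnerProductSpace

theorem encard_setOf_sq_sub_mul_add_eq_zero_le_two {R : Type*} [CommRing R] [IsDomain R]
    (b c : R) : {x : R | x ^ 2 - b * x + c = 0}.encard ≤ 2 := by
  rcases Set.eq_empty_or_nonempty {x : R | x ^ 2 - b * x + c = 0} with
    hempty | ⟨r, (hr : r ^ 2 - b * r + c = 0)⟩
  · simp [hempty]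
  have hsub : {x : R | x ^ 2 - b * x + c = 0} ⊆ {r, b - r} := by
    rintro s (hs : s ^ 2 - b * s + c = 0)
    have hfactor : (s - r) * (s - (b - r)) = 0 := by linear_combination hs - hr
    rcases mul_eq_zero.mp hfactor with h | h
    · exact Or.inl (sub_eq_zero.mp h)
    · exact Or.inr (sub_eq_zero.mp h)
  calc _ ≤ ({r, b - r} : Set R).encard := Set.encard_le_encard hsub
    _ ≤ 2 := (Set.encard_insert_le _ _).trans (by norm_num)

theorem gauss_curvature_apply_eigenvector_orthogonal
    {V : Type*} [NormedAddCommGroup V] [InnerProductSpace ℝ V]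
    (K : V →ₗ[ℝ] V →ₗ[ℝ] V) (hKsymm : ∀ X Y : V, K X Y = K Y X)
    (eps lam μ : ℝ) {T X : V} (hTT : K T T = lam • T) (hXT : ⟪X, T⟫ = 0)
    (hKX : K T X = μ • X) :
    eps • (⟪T, T⟫ • X - ⟪X, T⟫ • T) - (K X (K T T) - K T (K X T)) =
      (μ ^ 2 - lam * μ + eps * ‖T‖ ^ 2) • X := by
  have hKXTT : K X (K T T) = (lam * μ) • X := by
    rw [hTT, map_smul, hKsymm X T, hKX, smul_smul]
  have hKTXT : K T (K X T) = (μ * μ) • X := by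
    rw [hKsymm X T, hKX, map_smul, hKX, smul_smul]
  rw [hKXTT, hKTXT, hXT, real_inner_self_eq_norm_sq]
  module

theorem KT_eigenvalues_quadratic_at_most_two_general
    {V : Type*} [NormedAddCommGroup V] [InnerProductSpace ℝ V]
    (K : V →ₗ[ℝ] V →ₗ[ℝ] V) (hKsymm : ∀ X Y : V, K X Y = K Y X)
    (eps lam a : ℝ) (T : V) (hTT : K T T = lam • T)
    (R : V → V → V → V)
    (hR : ∀ X Y Z : V,
      R X Y Z = eps • (⟪Y, Z⟫ • X - ⟪X, Z⟫ • Y) - (K X (K Y Z) - K Y (K X Z)))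
    (hcurv : ∀ X : V, ⟪X, T⟫ = 0 → R X T T = (-a) • X) :
    (∀ μ : ℝ, (∃ X : V, X ≠ 0 ∧ ⟪X, T⟫ = 0 ∧ K T X = μ • X) →
        μ ^ 2 - lam * μ + eps * ‖T‖ ^ 2 + a = 0) ∧
      ({μ : ℝ | ∃ X : V, X ≠ 0 ∧ ⟪X, T⟫ = 0 ∧ K T X = μ • X}.encard ≤ 2) := by
  have quadratic : ∀ μ : ℝ, (∃ X : V, X ≠ 0 ∧ ⟪X, T⟫ = 0 ∧ K T X = μ • X) →
      μ ^ 2 - lam * μ + eps * ‖T‖ ^ 2 + a = 0 := by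
    rintro μ ⟨X, hX0, hXT, hKX⟩
    have hRXTT := hcurv X hXT
    rw [hR, gauss_curvature_apply_eigenvector_orthogonal K hKsymm eps lam μ hTT hXT hKX]
      at hRXTT
    have hsmul : (μ ^ 2 - lam * μ + eps * ‖T‖ ^ 2 + a) • X = 0 := by
      rw [add_smul, hRXTT, neg_smul, neg_add_cancel]
    exact (smul_eq_zero.mp hsmul).resolve_right hX0
  refine ⟨quadratic, ?_⟩
  calc _ ≤ {μ : ℝ | μ ^ 2 - lam * μ + (eps * ‖T‖ ^ 2 + a) = 0}.encard :=
        Set.encard_le_encard fun μ hμ => (add_assoc _ _ _).symm.trans (quadratic μ hμ)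
    _ ≤ 2 := encard_setOf_sq_sub_mul_add_eq_zero_le_two _ _

/-- Lemma 3.2(i), pointwise eigenvalue form: under `K T T = λ T` and
`R(X,T)T = −a X` for `X ⊥ T`, every eigenvalue `μ` of `K_T` on the orthogonal
complement of `T` satisfies `μ² − λμ + ε‖T‖² + a = 0`; in particular there are
at most two such eigenvalues. -/
theorem KT_eigenvalues_quadratic_at_most_two
    {V : Type*} [NormedAddCommGroup V] [InnerProductSpace ℝ V] [FiniteDimensional ℝ V]
    (K : V →ₗ[ℝ] V →ₗ[ℝ] V) (hKsymm : ∀ X Y : V, K X Y = K Y X)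
    (eps lam a : ℝ) (T : V) (hTT : K T T = lam • T)
    (R : V → V → V → V)
    (hR : ∀ X Y Z : V,
      R X Y Z = eps • (⟪Y, Z⟫ • X - ⟪X, Z⟫ • Y) - (K X (K Y Z) - K Y (K X Z)))
    (hcurv : ∀ X : V, ⟪X, T⟫ = 0 → R X T T = (-a) • X) :
    (∀ μ : ℝ, (∃ X : V, X ≠ 0 ∧ ⟪X, T⟫ = 0 ∧ K T X = μ • X) →
        μ ^ 2 - lam * μ + eps * ‖T‖ ^ 2 + a = 0) ∧
      ({μ : ℝ | ∃ X : V, X ≠ 0 ∧ ⟪X, T⟫ = 0 ∧ K T X = μ • X}.encard ≤ 2) :=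
  KT_eigenvalues_quadratic_at_most_two_general K hKsymm eps lam a T hTT R hR hcurv
end

section
/- Let I ⊆ ℝ be an interval and λ, α, μ, s : I → ℝ differentiable functions and ε ∈ ℝ satisfying s′ = 2αs, μ′ = (λ − μ)α and α′ = −μ² + λμ − εs on I. Then the function εs − μ² + α² is constant on I. -/
theorem Set.OrdConnected.eq_of_hasDerivAt_eq_zero {E : Type*} [NormedAddCommGroup E]
    [NormedSpace ℝ E] {I : Set ℝ} (hI : I.OrdConnected) {f : ℝ → E}
    (hf : ∀ t ∈ I, HasDerivAt f 0 t) {x y : ℝ} (hx : x ∈ I) (hy : y ∈ I) : f x = f y := by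
  have h := hI.convex.norm_image_sub_le_of_norm_hasDerivWithin_le
    (fun t ht => (hf t ht).hasDerivWithinAt) (fun _ _ => norm_zero.le) hx hy
  rw [zero_mul, norm_le_zero_iff, sub_eq_zero] at h
  exact h.symm

theorem hasDerivAt_eps_mul_sub_sq_add_sq {eps lam t : ℝ} {alp mu s : ℝ → ℝ}
    (hs : HasDerivAt s (2 * alp t * s t) t)
    (hmu : HasDerivAt mu ((lam - mu t) * alp t) t)
    (halp : HasDerivAt alp (-(mu t) ^ 2 + lam * mu t - eps * s t) t) :
    HasDerivAt (fun t => eps * s t - (mu t) ^ 2 + (alp t) ^ 2) 0 t :=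
  (((hs.const_mul eps).sub (hmu.pow 2)).add (halp.pow 2)).congr_deriv (by ring)

/-- If on an interval `I` one has `s′ = 2αs`, `μ′ = (λ − μ)α` and
`α′ = −μ² + λμ − εs`, then `εs − μ² + α²` is constant on `I`. -/
theorem c0_constant
    (I : Set ℝ) (hI : I.OrdConnected) (eps : ℝ) (lam alp mu s : ℝ → ℝ)
    (hs : ∀ t ∈ I, HasDerivAt s (2 * alp t * s t) t)
    (hmu : ∀ t ∈ I, HasDerivAt mu ((lam t - mu t) * alp t) t)
    (halp : ∀ t ∈ I, HasDerivAt alp (-(mu t) ^ 2 + lam t * mu t - eps * s t) t) :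
    ∀ t₁ ∈ I, ∀ t₂ ∈ I,
      eps * s t₁ - (mu t₁) ^ 2 + (alp t₁) ^ 2
        = eps * s t₂ - (mu t₂) ^ 2 + (alp t₂) ^ 2 := fun _ h₁ _ h₂ =>
  hI.eq_of_hasDerivAt_eq_zero
    (fun t ht => hasDerivAt_eps_mul_sub_sq_add_sq (hs t ht) (hmu t ht) (halp t ht)) h₁ h₂
end

section
/- Let I ⊆ ℝ be an interval, λ, α, μ, s : I → ℝ with α, μ differentiable, ε ∈ ℝ, satisfying α′ = −μ² + λμ − εs and μ′ = (λ − μ)α on I. Let A : I → ℝ be an antiderivative of α + μ. Then the function x₁ := exp∘A satisfies the second-order linear ODE x₁″ = (λ + α)·x₁′ − εs·x₁ on I. -/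
/-! With `x₁ = exp A` one has `x₁′ = A′x₁` and `x₁″ = (A″ + A′²)x₁`. For `A′ = α + μ` the two
structure equations give `A″ + A′² = (λ + α)(α + μ) − εs`, which is the ODE. -/

open Real

theorem hasDerivAt_mul_exp_of_hasDerivAt {A a : ℝ → ℝ} {a' t : ℝ}
    (hA : HasDerivAt A (a t) t) (ha : HasDerivAt a a' t) :
    HasDerivAt (fun u => a u * exp (A u)) ((a' + a t ^ 2) * exp (A t)) t := by
  refine (ha.mul hA.exp).congr_deriv ?_
  ring

theorem x1_solves_ode_general
    (I : Set ℝ) (eps : ℝ) (lam alp mu s A : ℝ → ℝ)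
    (halp : ∀ t ∈ I, HasDerivAt alp (-(mu t) ^ 2 + lam t * mu t - eps * s t) t)
    (hmu : ∀ t ∈ I, HasDerivAt mu ((lam t - mu t) * alp t) t)
    (hA : ∀ t ∈ I, HasDerivAt A (alp t + mu t) t) :
    ∃ x₁' : ℝ → ℝ,
      (∀ t ∈ I, HasDerivAt (fun u => Real.exp (A u)) (x₁' t) t) ∧
      (∀ t ∈ I, HasDerivAt x₁'
        ((lam t + alp t) * x₁' t - eps * s t * Real.exp (A t)) t) := by
  refine ⟨fun t => (alp t + mu t) * exp (A t), fun t ht => ?_, fun t ht => ?_⟩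
  · simpa only [mul_comm] using (hA t ht).exp
  · have hsum : HasDerivAt (fun u => alp u + mu u)
        (-(mu t) ^ 2 + lam t * mu t - eps * s t + (lam t - mu t) * alp t) t :=
      (halp t ht).add (hmu t ht)
    convert hasDerivAt_mul_exp_of_hasDerivAt (hA t ht) hsum using 1
    ring

/-- First half of Lemma 3.3: under `α′ = −μ² + λμ − εs` and
`μ′ = (λ − μ)α` on an interval `I`, and `A′ = α + μ`, the function
`x₁ = exp ∘ A` solves `x₁″ = (λ + α)x₁′ − εs·x₁` on `I`. -/
theorem x1_solves_ode
    (I : Set ℝ) (hI : I.OrdConnected) (eps : ℝ) (lam alp mu s A : ℝ → ℝ)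
    (halp : ∀ t ∈ I, HasDerivAt alp (-(mu t) ^ 2 + lam t * mu t - eps * s t) t)
    (hmu : ∀ t ∈ I, HasDerivAt mu ((lam t - mu t) * alp t) t)
    (hA : ∀ t ∈ I, HasDerivAt A (alp t + mu t) t) :
    ∃ x₁' : ℝ → ℝ,
      (∀ t ∈ I, HasDerivAt (fun u => Real.exp (A u)) (x₁' t) t) ∧
      (∀ t ∈ I, HasDerivAt x₁'
        ((lam t + alp t) * x₁' t - eps * s t * Real.exp (A t)) t) :=
  x1_solves_ode_general I eps lam alp mu s A halp hmu hA
end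

section
/- Let I ⊆ ℝ be an interval, λ, α, μ, s : I → ℝ with λ continuous and α, μ differentiable, ε ∈ ℝ, satisfying α′ = −μ² + λμ − εs and μ′ = (λ − μ)α on I. Let A be an antiderivative of α + μ, B an antiderivative of λ − 2μ − α, and G an antiderivative of exp∘B on I. Then the function x₂ := (exp∘A)·G satisfies the second-order linear ODE x₂″ = (λ + α)·x₂′ − εs·x₂ on I. -/
/-!
The structure relations say exactly that `a = α + μ` satisfies the Riccati equation
`a′ + a² = (λ + α) a − ε s`, so `x₁ = exp A` solves the ODE. The second solution comes from
reduction of order: `x₂ = x₁ G` solves the ODE as soon as `(x₁² G′)′ = (λ + α) x₁² G′`, and here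
`x₁² G′ = exp (2A + B)` with `(2A + B)′ = λ + α`.
-/

open Real

def SolvesLinearODE (S : Set ℝ) (p q x x' : ℝ → ℝ) : Prop :=
  (∀ t ∈ S, HasDerivAt x (x' t) t) ∧ ∀ t ∈ S, HasDerivAt x' (p t * x' t + q t * x t) t

section

variable {S : Set ℝ} {p q : ℝ → ℝ}

theorem solvesLinearODE_exp {A a : ℝ → ℝ} (hA : ∀ t ∈ S, HasDerivAt A (a t) t)
    (ha : ∀ t ∈ S, HasDerivAt a (p t * a t + q t - a t ^ 2) t) :
    SolvesLinearODE S p q (fun t => exp (A t)) (fun t => a t * exp (A t)) := by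
  refine ⟨fun t ht => ?_, fun t ht => ?_⟩
  · simpa only [mul_comm] using (hA t ht).exp
  · exact ((ha t ht).mul (hA t ht).exp).congr_deriv (by ring)

/-- Reduction of order: `habel` says that the Wronskian `x₁² g` of `x₁` and `x₁ G` satisfies
Abel's equation `W′ = p W`. -/
theorem SolvesLinearODE.mul_antiderivative {x₁ v₁ G g g' : ℝ → ℝ}
    (h : SolvesLinearODE S p q x₁ v₁) (hG : ∀ t ∈ S, HasDerivAt G (g t) t)
    (hg : ∀ t ∈ S, HasDerivAt g (g' t) t)
    (habel : ∀ t ∈ S, x₁ t * g' t = (p t * x₁ t - 2 * v₁ t) * g t) :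
    SolvesLinearODE S p q (fun t => x₁ t * G t) (fun t => v₁ t * G t + x₁ t * g t) := by
  refine ⟨fun t ht => (h.1 t ht).mul (hG t ht), fun t ht => ?_⟩
  exact (((h.2 t ht).mul (hG t ht)).add ((h.1 t ht).mul (hg t ht))).congr_deriv
    (by linear_combination habel t ht)

end

theorem x2_solves_ode_general
    (I : Set ℝ) (eps : ℝ) (lam alp mu s A B G : ℝ → ℝ)
    (halp : ∀ t ∈ I, HasDerivAt alp (-(mu t) ^ 2 + lam t * mu t - eps * s t) t)
    (hmu : ∀ t ∈ I, HasDerivAt mu ((lam t - mu t) * alp t) t)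
    (hA : ∀ t ∈ I, HasDerivAt A (alp t + mu t) t)
    (hB : ∀ t ∈ I, HasDerivAt B (lam t - 2 * mu t - alp t) t)
    (hG : ∀ t ∈ I, HasDerivAt G (Real.exp (B t)) t) :
    ∃ x₂' : ℝ → ℝ,
      (∀ t ∈ I, HasDerivAt (fun u => Real.exp (A u) * G u) (x₂' t) t) ∧
      (∀ t ∈ I, HasDerivAt x₂'
        ((lam t + alp t) * x₂' t - eps * s t * (Real.exp (A t) * G t)) t) := by
  have hriccati : ∀ t ∈ I, HasDerivAt (fun u => alp u + mu u)
      ((lam t + alp t) * (alp t + mu t) + -(eps * s t) - (alp t + mu t) ^ 2) t := fun t ht =>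
    ((halp t ht).add (hmu t ht)).congr_deriv (by ring)
  have hx₁ : SolvesLinearODE I (fun t => lam t + alp t) (fun t => -(eps * s t))
      (fun t => exp (A t)) (fun t => (alp t + mu t) * exp (A t)) :=
    solvesLinearODE_exp (a := fun u => alp u + mu u) hA hriccati
  obtain ⟨hx₂, hx₂'⟩ := hx₁.mul_antiderivative hG (fun t ht => (hB t ht).exp) fun t _ => by ring
  exact ⟨_, hx₂, fun t ht => (hx₂' t ht).congr_deriv (by ring)⟩

/-- Second half of Lemma 3.3: under `α′ = −μ² + λμ − εs` and
`μ′ = (λ − μ)α` on an interval `I`, with `A′ = α + μ`, `B′ = λ − 2μ − α` and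
`G′ = exp ∘ B`, the function `x₂ = (exp ∘ A)·G` solves
`x₂″ = (λ + α)x₂′ − εs·x₂` on `I`. -/
theorem x2_solves_ode
    (I : Set ℝ) (hI : I.OrdConnected) (eps : ℝ) (lam alp mu s A B G : ℝ → ℝ)
    (hlam : ContinuousOn lam I)
    (halp : ∀ t ∈ I, HasDerivAt alp (-(mu t) ^ 2 + lam t * mu t - eps * s t) t)
    (hmu : ∀ t ∈ I, HasDerivAt mu ((lam t - mu t) * alp t) t)
    (hA : ∀ t ∈ I, HasDerivAt A (alp t + mu t) t)
    (hB : ∀ t ∈ I, HasDerivAt B (lam t - 2 * mu t - alp t) t)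
    (hG : ∀ t ∈ I, HasDerivAt G (Real.exp (B t)) t) :
    ∃ x₂' : ℝ → ℝ,
      (∀ t ∈ I, HasDerivAt (fun u => Real.exp (A u) * G u) (x₂' t) t) ∧
      (∀ t ∈ I, HasDerivAt x₂'
        ((lam t + alp t) * x₂' t - eps * s t * (Real.exp (A t) * G t)) t) :=
  x2_solves_ode_general I eps lam alp mu s A B G halp hmu hA hB hG
end
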